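/- Let g ∈ L²([0,1]^s) and let f(x) = g(φ(x)) where φ is the componentwise tent transform. Then for every subset u ⊆ {1,…,s} and every vector k_u ∈ ℕ^u of positive integers indexed by u, the Fourier cosine coefficient of g satisfies ĝ(k_u, 0) = 2^{−|u|/2}·∑_{v ⊆ u} f̃(((−1)^{1_{j∈v}} k_j)_{j∈u}, 0), where (((−1)^{1_{j∈v}} k_j)_{j∈u}, 0) is the vector in ℤ^s whose j-th component is −k_j for j ∈ v, k_j for j ∈ u \ v, and 0 otherwise. -/

import Mathlib

open scoped BigOperators
open MeasureTheory

/-- The normalized cosine basis functions: `σ_0 = 1`, `σ_k(t) = √2 cos(πkt)` for `k ≥ 1`. -/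
noncomputable def sigmaK (k : ℕ) (t : ℝ) : ℝ :=
  if k = 0 then 1 else Real.sqrt 2 * Real.cos (Real.pi * k * t)

/-- The Fourier cosine coefficient `ĝ(k) = ∫_{[0,1]^s} g(x) σ_k(x) dx`. -/
noncomputable def coscoeff (s : ℕ) (g : (Fin s → ℝ) → ℂ) (k : Fin s → ℕ) : ℂ :=
  ∫ x in Set.pi Set.univ (fun _ : Fin s => Set.Icc (0 : ℝ) 1),
    g x * ((∏ j : Fin s, sigmaK (k j) (x j) : ℝ) : ℂ)

/-- The Fourier coefficient `f̃(k) = ∫_{[0,1]^s} f(x) e^{-2πi k·x} dx`. -/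
noncomputable def fcoeff (s : ℕ) (f : (Fin s → ℝ) → ℂ) (k : Fin s → ℤ) : ℂ :=
  ∫ x in Set.pi Set.univ (fun _ : Fin s => Set.Icc (0 : ℝ) 1),
    f x * Complex.exp (-(2 * (Real.pi : ℂ) * Complex.I) * ∑ j : Fin s, (k j : ℂ) * (x j : ℂ))

open scoped BigOperators
open MeasureTheory

namespace Stmt10Aux

open Set

variable {s : ℕ}

noncomputable def cube (s : ℕ) : Set (Fin s → ℝ) :=
  Set.pi Set.univ (fun _ : Fin s => Set.Icc (0 : ℝ) 1)

lemma measurableSet_cube : MeasurableSet (cube s) :=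
  MeasurableSet.univ_pi fun _ => measurableSet_Icc

noncomputable def box (t : Finset (Fin s)) : Set (Fin s → ℝ) :=
  Set.pi Set.univ (fun j => if j ∈ t then Set.Icc (1/2 : ℝ) 1 else Set.Icc (0:ℝ) (1/2))

lemma measurableSet_box (t : Finset (Fin s)) : MeasurableSet (box t) :=
  MeasurableSet.univ_pi fun j => by split <;> exact measurableSet_Icc

lemma box_subset_cube (t : Finset (Fin s)) : box t ⊆ cube s := by
  intro x hx j _
  have := hx j (Set.mem_univ j)
  dsimp only at this
  split at this <;> exact ⟨by linarith [this.1, this.2], by linarith [this.1, this.2]⟩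

noncomputable def Tmap (t : Finset (Fin s)) (y : Fin s → ℝ) : Fin s → ℝ :=
  fun j => if j ∈ t then 1 - y j / 2 else y j / 2

noncomputable def Sequiv (t : Finset (Fin s)) : (Fin s → ℝ) ≃ᵐ (Fin s → ℝ) :=
  MeasurableEquiv.piCongrRight
    (fun j => if j ∈ t then (Homeomorph.subLeft (2:ℝ)).toMeasurableEquiv
      else MeasurableEquiv.refl ℝ)

lemma Sequiv_apply (t : Finset (Fin s)) (y : Fin s → ℝ) (j : Fin s) :
    Sequiv t y j = if j ∈ t then 2 - y j else y j := by
  show (if j ∈ t then (Homeomorph.subLeft (2:ℝ)).toMeasurableEquiv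
      else MeasurableEquiv.refl ℝ) (y j) = _
  split <;> rfl

lemma measurePreserving_Sequiv (t : Finset (Fin s)) :
    MeasurePreserving (Sequiv t) volume volume := by
  have h : MeasurePreserving
      (fun (y : Fin s → ℝ) (j : Fin s) =>
        (fun x => if j ∈ t then 2 - x else x) (y j)) volume volume := by
    refine volume_preserving_pi (f := fun j x => if j ∈ t then 2 - x else x) (fun j => ?_)
    by_cases hj : j ∈ t
    · simpa [hj] using Measure.measurePreserving_sub_left (volume : Measure ℝ) 2
    · simp only [hj, if_false]; exact MeasurePreserving.id (volume : Measure ℝ)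
  have : (Sequiv t : (Fin s → ℝ) → (Fin s → ℝ))
      = fun y j => (fun x => if j ∈ t then 2 - x else x) (y j) := by
    funext y j; simp [Sequiv_apply]
  rw [this]
  exact h

lemma Tmap_eq_smul (t : Finset (Fin s)) (y : Fin s → ℝ) :
    Tmap t y = (2⁻¹ : ℝ) • (Sequiv t y) := by
  funext j
  simp only [Tmap, Pi.smul_apply, smul_eq_mul, Sequiv_apply]
  split <;> ring

lemma integral_comp_Tmap (t : Finset (Fin s)) (H : (Fin s → ℝ) → ℂ) :
    ∫ y, H (Tmap t y) = ((2:ℝ)^s) • ∫ x, H x := by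
  calc ∫ y, H (Tmap t y) = ∫ y, (fun z => H ((2⁻¹:ℝ) • z)) (Sequiv t y) := by
        simp_rw [Tmap_eq_smul]
    _ = ∫ z, H ((2⁻¹:ℝ) • z) := (measurePreserving_Sequiv t).integral_comp' (fun z => H ((2⁻¹:ℝ) • z))
    _ = ((2:ℝ)^s) • ∫ x, H x := by
        rw [Measure.integral_comp_smul volume H (2⁻¹:ℝ)]
        congr 1
        rw [Module.finrank_fin_fun]
        rw [inv_pow, inv_inv, abs_of_pos (by positivity)]

lemma integrable_comp_Tmap_iff (t : Finset (Fin s)) (H : (Fin s → ℝ) → ℂ) :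
    Integrable (fun y => H (Tmap t y)) volume ↔ Integrable H volume := by
  have h1 : (fun y => H (Tmap t y))
      = (fun z => H ((2⁻¹:ℝ) • z)) ∘ (Sequiv t) := by
    funext y; simp [Tmap_eq_smul]
  rw [h1, (measurePreserving_Sequiv t).integrable_comp_emb (Sequiv t).measurableEmbedding]
  exact integrable_comp_smul_iff volume H (by norm_num)


lemma Tmap_mem_box_iff (t : Finset (Fin s)) (y : Fin s → ℝ) :
    Tmap t y ∈ box t ↔ y ∈ cube s := by
  simp only [box, cube, Set.mem_pi, Set.mem_univ, true_implies]
  refine forall_congr' fun j => ?_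
  simp only [Tmap]
  by_cases hj : j ∈ t <;>
    simp only [hj, if_true, if_false, Set.mem_Icc] <;>
    constructor <;> rintro ⟨h1, h2⟩ <;> constructor <;> linarith

lemma phi_Tmap (t : Finset (Fin s)) {y : Fin s → ℝ} (hy : y ∈ cube s) :
    (fun j => 1 - |2 * Tmap t y j - 1|) = y := by
  funext j
  obtain ⟨h0, h1⟩ := hy j (Set.mem_univ j)
  simp only [Tmap]
  by_cases hj : j ∈ t
  · rw [if_pos hj, show 2 * (1 - y j / 2) - 1 = 1 - y j by ring,
      abs_of_nonneg (by linarith)]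
    ring
  · rw [if_neg hj, show 2 * (y j / 2) - 1 = -(1 - y j) by ring, abs_neg,
      abs_of_nonneg (by linarith)]
    ring

lemma exp_comp_Tmap (t : Finset (Fin s)) (m : Fin s → ℤ) (y : Fin s → ℝ) :
    Complex.exp (-(2 * (Real.pi : ℂ) * Complex.I) *
        ∑ j : Fin s, (m j : ℂ) * ((Tmap t y j : ℝ) : ℂ))
      = ∏ j : Fin s, Complex.exp
          (((if j ∈ t then (Real.pi * m j * y j) else -(Real.pi * m j * y j) : ℝ) : ℂ)
            * Complex.I) := by
  rw [Finset.mul_sum, Complex.exp_sum]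
  refine Finset.prod_congr rfl fun j _ => ?_
  by_cases hj : j ∈ t
  · simp only [Tmap, hj, if_true]
    rw [show -(2 * (Real.pi:ℂ) * Complex.I) * ((m j : ℂ) * ((1 - y j / 2 : ℝ) : ℂ))
        = ((-(m j) : ℤ) : ℂ) * (2 * (Real.pi:ℂ) * Complex.I)
          + ((Real.pi * m j * y j : ℝ) : ℂ) * Complex.I by push_cast; ring]
    rw [Complex.exp_add, Complex.exp_int_mul_two_pi_mul_I, one_mul]
  · simp only [Tmap, hj, if_false]
    congr 1
    push_cast
    ring


noncomputable def F (g : (Fin s → ℝ) → ℂ) (m : Fin s → ℤ) : (Fin s → ℝ) → ℂ :=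
  fun x => g (fun j => 1 - |2 * x j - 1|) *
    Complex.exp (-(2 * (Real.pi:ℂ) * Complex.I) * ∑ j : Fin s, (m j : ℂ) * (x j : ℂ))

noncomputable def P (t : Finset (Fin s)) (m : Fin s → ℤ) (y : Fin s → ℝ) : ℂ :=
  ∏ j : Fin s, Complex.exp
    (((if j ∈ t then (Real.pi * m j * y j) else -(Real.pi * m j * y j) : ℝ) : ℂ) * Complex.I)

noncomputable def K (g : (Fin s → ℝ) → ℂ) (t : Finset (Fin s)) (m : Fin s → ℤ) :
    (Fin s → ℝ) → ℂ :=
  (cube s).indicator (fun y => g y * P t m y)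

lemma key_pointwise (g : (Fin s → ℝ) → ℂ) (t : Finset (Fin s)) (m : Fin s → ℤ)
    (y : Fin s → ℝ) : (box t).indicator (F g m) (Tmap t y) = K g t m y := by
  classical
  rw [K, Set.indicator_apply, Set.indicator_apply]
  by_cases hy : y ∈ cube s
  · rw [if_pos ((Tmap_mem_box_iff t y).2 hy), if_pos hy]
    show F g m (Tmap t y) = _
    rw [F, phi_Tmap t hy, exp_comp_Tmap]
    rfl
  · rw [if_neg (fun h => hy ((Tmap_mem_box_iff t y).1 h)), if_neg hy]

lemma box_piece (g : (Fin s → ℝ) → ℂ) (t : Finset (Fin s)) (m : Fin s → ℤ) :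
    ∫ x, (box t).indicator (F g m) x = ((2:ℝ)^s)⁻¹ • ∫ y, K g t m y := by
  have h2 := integral_comp_Tmap t ((box t).indicator (F g m))
  simp_rw [key_pointwise g t m] at h2
  rw [h2, smul_smul, inv_mul_cancel₀ (by positivity), one_smul]

lemma P_continuous (t : Finset (Fin s)) (m : Fin s → ℤ) : Continuous (P t m) := by
  apply continuous_finset_prod
  intro j _
  apply Complex.continuous_exp.comp
  apply Continuous.mul _ continuous_const
  apply Complex.continuous_ofReal.comp
  split <;> fun_prop

lemma norm_P_le (t : Finset (Fin s)) (m : Fin s → ℤ) (y : Fin s → ℝ) : ‖P t m y‖ ≤ 1 := by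
  rw [P, norm_prod]
  simp [Complex.norm_exp_ofReal_mul_I]

lemma K_integrable {g : (Fin s → ℝ) → ℂ} (hgi : IntegrableOn g (cube s) volume)
    (t : Finset (Fin s)) (m : Fin s → ℤ) : Integrable (K g t m) volume := by
  have h : K g t m = fun y => P t m y * (cube s).indicator g y := by
    funext y
    by_cases hy : y ∈ cube s <;> simp [K, hy, mul_comm]
  rw [h]
  refine Integrable.bdd_mul ?_ ?_ (Filter.Eventually.of_forall (norm_P_le t m))
  · exact (integrable_indicator_iff measurableSet_cube).2 hgi
  · exact (P_continuous t m).aestronglyMeasurable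

lemma boxF_integrable {g : (Fin s → ℝ) → ℂ} (hgi : IntegrableOn g (cube s) volume)
    (t : Finset (Fin s)) (m : Fin s → ℤ) :
    Integrable ((box t).indicator (F g m)) volume := by
  rw [← integrable_comp_Tmap_iff t]
  have h : (fun y => (box t).indicator (F g m) (Tmap t y)) = K g t m :=
    funext (key_pointwise g t m)
  rw [h]
  exact K_integrable hgi t m


lemma ae_ne_half : ∀ᵐ x : (Fin s → ℝ) ∂volume, ∀ j, x j ≠ (1/2 : ℝ) := by
  rw [MeasureTheory.ae_all_iff]
  intro j
  have hnull : volume {x : Fin s → ℝ | x j = 1/2} = 0 := by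
    classical
    have heq : {x : Fin s → ℝ | x j = 1/2}
        = Set.pi Set.univ (fun i => if i = j then ({1/2} : Set ℝ) else Set.univ) := by
      ext x
      simp only [Set.mem_setOf_eq, Set.mem_pi, Set.mem_univ, true_implies]
      constructor
      · intro h i
        by_cases hij : i = j
        · subst hij; simp [h]
        · simp [hij]
      · intro h
        have := h j
        simpa using this
    rw [heq, volume_pi_pi]
    exact Finset.prod_eq_zero (Finset.mem_univ j) (by simp)
  rw [ae_iff]
  simpa using hnull

lemma indicator_decomp (G : (Fin s → ℝ) → ℂ) :
    (cube s).indicator G =ᵐ[(volume : Measure (Fin s → ℝ))]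
      fun x => ∑ t ∈ (Finset.univ : Finset (Fin s)).powerset, (box t).indicator G x := by
  classical
  filter_upwards [ae_ne_half] with x hx
  by_cases hc : x ∈ cube s
  · rw [Set.indicator_of_mem hc]
    set t₀ : Finset (Fin s) := Finset.univ.filter (fun j => 1/2 < x j) with ht₀
    have hmem : x ∈ box t₀ := by
      simp only [box, Set.mem_univ_pi]
      intro j
      have h := hc j (Set.mem_univ j)
      by_cases hj : j ∈ t₀
      · have hlt : 1/2 < x j := by
          have := (Finset.mem_filter.1 hj).2
          simpa using this
        simp only [hj, if_true, Set.mem_Icc]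
        exact ⟨le_of_lt hlt, h.2⟩
      · have hle : ¬ (1/2 : ℝ) < x j := by
          intro hcon
          exact hj (Finset.mem_filter.2 ⟨Finset.mem_univ j, hcon⟩)
        simp only [hj, if_false, Set.mem_Icc]
        exact ⟨h.1, le_of_not_gt hle⟩
    rw [Finset.sum_eq_single_of_mem t₀ (Finset.mem_powerset.2 (Finset.subset_univ t₀))]
    · rw [Set.indicator_of_mem hmem]
    · intro t _ hne
      refine Set.indicator_of_notMem (fun hxt => hne ?_) _
      ext j
      simp only [ht₀, Finset.mem_filter, Finset.mem_univ, true_and]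
      have h := hxt j (Set.mem_univ j)
      by_cases hj : j ∈ t
      · simp only [hj, if_true, Set.mem_Icc] at h
        simp only [hj, true_iff]
        exact lt_of_le_of_ne h.1 (Ne.symm (hx j))
      · simp only [hj, if_false, Set.mem_Icc] at h
        simp only [hj, false_iff, not_lt]
        exact h.2
  · rw [Set.indicator_of_notMem hc]
    exact (Finset.sum_eq_zero fun t _ =>
      Set.indicator_of_notMem (fun hb => hc (box_subset_cube t hb)) _).symm

lemma fcoeff_tent {g : (Fin s → ℝ) → ℂ} (hgi : IntegrableOn g (cube s) volume)
    (m : Fin s → ℤ) :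
    (∫ x in cube s, F g m x)
      = ∫ y in cube s, g y *
          ((∏ j : Fin s, Real.cos (Real.pi * m j * y j) : ℝ) : ℂ) := by
  classical
  rw [← integral_indicator measurableSet_cube, ← integral_indicator measurableSet_cube]
  rw [integral_congr_ae (indicator_decomp (F g m))]
  rw [integral_finset_sum _ (fun t _ => boxF_integrable hgi t m)]
  rw [Finset.sum_congr rfl (fun t _ => box_piece g t m)]
  rw [← Finset.smul_sum]
  rw [← integral_finset_sum _ (fun t _ => K_integrable hgi t m)]
  have hsum : ∀ y : Fin s → ℝ,
      ∑ t ∈ (Finset.univ : Finset (Fin s)).powerset, K g t m y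
        = ((2:ℂ)^s) • (cube s).indicator
            (fun y => g y * ((∏ j : Fin s, Real.cos (Real.pi * m j * y j) : ℝ) : ℂ)) y := by
    intro y
    by_cases hy : y ∈ cube s
    · simp only [K, Set.indicator_of_mem hy, smul_eq_mul]
      rw [← Finset.mul_sum]
      have hP : ∑ t ∈ (Finset.univ : Finset (Fin s)).powerset, P t m y
          = (2:ℂ)^s * ((∏ j : Fin s, Real.cos (Real.pi * m j * y j) : ℝ) : ℂ) := by
        calc ∑ t ∈ (Finset.univ : Finset (Fin s)).powerset, P t m y
            = ∑ t ∈ (Finset.univ : Finset (Fin s)).powerset,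
                (∏ j ∈ t, Complex.exp (((Real.pi * m j * y j : ℝ) : ℂ) * Complex.I)) *
                  ∏ j ∈ Finset.univ \ t,
                    Complex.exp (((-(Real.pi * m j * y j) : ℝ) : ℂ) * Complex.I) := by
              refine Finset.sum_congr rfl fun t ht => ?_
              rw [P, ← Finset.prod_filter_mul_prod_filter_not Finset.univ (· ∈ t)]
              congr 1
              · rw [Finset.filter_univ_mem t]
                exact Finset.prod_congr rfl fun j hj => by rw [if_pos hj]
              · rw [Finset.filter_not, Finset.filter_univ_mem t]
                exact Finset.prod_congr rfl fun j hj => by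
                  rw [if_neg (Finset.mem_sdiff.1 hj).2]
          _ = ∏ j : Fin s,
                (Complex.exp (((Real.pi * m j * y j : ℝ) : ℂ) * Complex.I) +
                  Complex.exp (((-(Real.pi * m j * y j) : ℝ) : ℂ) * Complex.I)) :=
              (Finset.prod_add _ _ Finset.univ).symm
          _ = ∏ j : Fin s, (2:ℂ) * Complex.cos ((Real.pi * m j * y j : ℝ) : ℂ) := by
              refine Finset.prod_congr rfl fun j _ => ?_
              rw [Complex.cos]
              push_cast
              ring
          _ = (2:ℂ)^s * ((∏ j : Fin s, Real.cos (Real.pi * m j * y j) : ℝ) : ℂ) := by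
              rw [Finset.prod_mul_distrib, Finset.prod_const, Complex.ofReal_prod]
              simp [Complex.ofReal_cos, Finset.card_univ]
      rw [hP]; ring
    · simp [K, Set.indicator_of_notMem hy]
  rw [integral_congr_ae (Filter.EventuallyEq.of_eq (funext hsum))]
  rw [integral_smul, ← smul_assoc]
  rw [show ((2:ℝ)^s)⁻¹ • ((2:ℂ)^s) = (1:ℂ) by
    rw [Complex.real_smul]; push_cast; field_simp]
  rw [one_smul]

lemma sqrt_two_pow (c : ℕ) : (Real.sqrt 2)^c = (2:ℝ)^(-(c:ℝ)/2) * 2^c := by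
  have h2 : (0:ℝ) < 2 := two_pos
  rw [Real.sqrt_eq_rpow, ← Real.rpow_natCast ((2:ℝ)^((1:ℝ)/2)) c,
    ← Real.rpow_natCast (2:ℝ) c, ← Real.rpow_mul h2.le, ← Real.rpow_add h2]
  congr 1
  ring

end Stmt10Aux

/-- For `g ∈ L²([0,1]^s)` and `f = g ∘ φ` (componentwise tent transform), for every
`u ⊆ {1,…,s}` and positive integer vector `k_u ∈ ℕ^u`:
`ĝ(k_u, 0) = 2^{-|u|/2} ∑_{v ⊆ u} f̃(((-1)^{1_{j∈v}} k_j)_{j∈u}, 0)`. -/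
theorem stmt_10 (s : ℕ) (g : (Fin s → ℝ) → ℂ)
    (hg : MemLp g 2 (volume.restrict (Set.pi Set.univ (fun _ : Fin s => Set.Icc (0 : ℝ) 1))))
    (u : Finset (Fin s)) (k : Fin s → ℕ) (hk : ∀ j ∈ u, 1 ≤ k j) :
    coscoeff s g (fun j => if j ∈ u then k j else 0)
      = (((2 : ℝ) ^ (-(u.card : ℝ) / 2) : ℝ) : ℂ) *
          ∑ v ∈ u.powerset,
            fcoeff s (fun x => g (fun j => 1 - |2 * x j - 1|))
              (fun j => if j ∈ v then -(k j : ℤ) else if j ∈ u then (k j : ℤ) else 0) := by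
  classical
  haveI : IsFiniteMeasure (volume.restrict (Set.pi Set.univ (fun _ : Fin s => Set.Icc (0:ℝ) 1))) := by
    constructor
    rw [Measure.restrict_apply_univ]
    exact (isCompact_univ_pi (fun _ : Fin s => isCompact_Icc)).measure_lt_top
  have hgi : IntegrableOn g (Stmt10Aux.cube s) volume :=
    hg.integrable (by norm_num)
  set kk : Fin s → ℕ := fun j => if j ∈ u then k j else 0 with hkk
  set C : ℂ := ∫ y in Stmt10Aux.cube s,
      g y * ((∏ j : Fin s, Real.cos (Real.pi * (kk j : ℝ) * y j) : ℝ) : ℂ) with hC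
  have hterm : ∀ v ∈ u.powerset,
      fcoeff s (fun x => g (fun j => 1 - |2 * x j - 1|))
        (fun j => if j ∈ v then -(k j : ℤ) else if j ∈ u then (k j : ℤ) else 0) = C := by
    intro v hv
    have hsub : v ⊆ u := Finset.mem_powerset.1 hv
    set m : Fin s → ℤ := fun j => if j ∈ v then -(k j : ℤ) else if j ∈ u then (k j : ℤ) else 0
      with hm
    have h1 : fcoeff s (fun x => g (fun j => 1 - |2 * x j - 1|)) m
        = ∫ x in Stmt10Aux.cube s, Stmt10Aux.F g m x := rfl
    rw [h1, Stmt10Aux.fcoeff_tent hgi, hC]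
    congr 1
    funext y
    congr 2
    refine Finset.prod_congr rfl fun j _ => ?_
    by_cases hj : j ∈ v
    · have hju : j ∈ u := hsub hj
      simp only [hm, hkk, hj, hju, if_true]
      rw [show Real.pi * ((-(k j : ℤ) : ℤ) : ℝ) * y j
          = -(Real.pi * ((k j : ℕ) : ℝ) * y j) by push_cast; ring, Real.cos_neg]
    · by_cases hju : j ∈ u <;> simp [hm, hkk, hj, hju]
  rw [Finset.sum_congr rfl hterm, Finset.sum_const, Finset.card_powerset]
  have hcos : coscoeff s g kk
      = ((Real.sqrt 2 ^ u.card : ℝ) : ℂ) * C := by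
    have h1 : coscoeff s g kk
        = ∫ x in Stmt10Aux.cube s,
            g x * ((∏ j : Fin s, sigmaK (kk j) (x j) : ℝ) : ℂ) := rfl
    have h2 : ∀ x : Fin s → ℝ, (∏ j : Fin s, sigmaK (kk j) (x j))
        = Real.sqrt 2 ^ u.card * ∏ j : Fin s, Real.cos (Real.pi * (kk j : ℝ) * x j) := by
      intro x
      calc ∏ j : Fin s, sigmaK (kk j) (x j)
          = ∏ j : Fin s, ((if j ∈ u then Real.sqrt 2 else 1) *
              Real.cos (Real.pi * (kk j : ℝ) * x j)) := by
            refine Finset.prod_congr rfl fun j _ => ?_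
            by_cases hj : j ∈ u
            · have hkj : k j ≠ 0 := Nat.one_le_iff_ne_zero.1 (hk j hj)
              simp only [sigmaK, hkk, hj, if_true, hkj, if_false]
            · simp [sigmaK, hkk, hj]
        _ = (∏ j : Fin s, (if j ∈ u then Real.sqrt 2 else 1)) *
              ∏ j : Fin s, Real.cos (Real.pi * (kk j : ℝ) * x j) :=
            Finset.prod_mul_distrib
        _ = Real.sqrt 2 ^ u.card *
              ∏ j : Fin s, Real.cos (Real.pi * (kk j : ℝ) * x j) := by
            congr 1
            rw [Finset.prod_ite_mem Finset.univ u (fun _ => Real.sqrt 2),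
              Finset.univ_inter, Finset.prod_const]
    rw [h1]
    have h3 : (fun x => g x * ((∏ j : Fin s, sigmaK (kk j) (x j) : ℝ) : ℂ))
        = fun x => ((Real.sqrt 2 ^ u.card : ℝ) : ℂ) •
            (g x * ((∏ j : Fin s, Real.cos (Real.pi * (kk j : ℝ) * x j) : ℝ) : ℂ)) := by
      funext x
      rw [h2 x, smul_eq_mul]
      push_cast
      ring
    rw [h3, integral_smul, hC, smul_eq_mul]
  rw [hcos]
  rw [nsmul_eq_mul, ← mul_assoc]
  congr 1
  rw [Stmt10Aux.sqrt_two_pow, Complex.ofReal_mul]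
  congr 1
  push_cast
  ring
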